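/- For every 0 < ℓ ≤ 2·arsinh(1), the total area of the hyperbolic collar C(ℓ) satisfies Area(C(ℓ)) = ∫₀^{2π}∫_{−X(ℓ)}^{X(ℓ)} ρ_ℓ(s)² ds dθ = 2ℓ·tan(ℓ·X(ℓ)/(2π)) = 2ℓ/sinh(ℓ/2) ≤ 4. -/

import Mathlib

open Real Set MeasureTheory

/-- Half-length of the hyperbolic collar around a geodesic of length `ℓ`. -/
noncomputable def collarX (ℓ : ℝ) : ℝ :=
  (2 * π / ℓ) * (π / 2 - Real.arctan (Real.sinh (ℓ / 2)))

/-- Conformal factor of the collar metric. -/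
noncomputable def collarRho (ℓ s : ℝ) : ℝ :=
  ℓ / (2 * π * Real.cos (ℓ * s / (2 * π)))

/-
The area density is `(a / cos (a s))²` with `a = ℓ / (2π)`, whose primitive is `a tan (a s)`.
At the end of the collar `a X = π/2 - arctan (sinh (ℓ/2))`, whose tangent is `1 / sinh (ℓ/2)`;
the bound `4` is `x ≤ sinh x` for `x ≥ 0`.
-/

lemma abs_mul_lt_of_mem_uIcc_neg {a x s c : ℝ} (hs : s ∈ uIcc (-x) x)
    (hax : |a * x| < c) : |a * s| < c := by
  have hsx : |s| ≤ |x| :=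
    abs_le.2 (by rcases mem_uIcc.1 hs with h | h <;> constructor <;>
      linarith [le_abs_self x, neg_abs_le x])
  rw [abs_mul] at hax ⊢
  exact (mul_le_mul_of_nonneg_left hsx (abs_nonneg a)).trans_lt hax

theorem integral_sq_div_cos_mul {a x : ℝ} (hax : |a * x| < π / 2) :
    ∫ s in -x..x, (a / cos (a * s)) ^ 2 = 2 * a * tan (a * x) := by
  have hcos : ∀ s ∈ uIcc (-x) x, cos (a * s) ≠ 0 := fun s hs =>
    (cos_pos_of_mem_Ioo (abs_lt.1 (abs_mul_lt_of_mem_uIcc_neg hs hax))).ne'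
  have hderiv : ∀ s ∈ uIcc (-x) x,
      HasDerivAt (fun t => a * tan (a * t)) ((a / cos (a * s)) ^ 2) s := fun s hs =>
    (((hasDerivAt_tan (hcos s hs)).comp s ((hasDerivAt_id s).const_mul a)).const_mul a).congr_deriv
      (by ring)
  have hint : IntervalIntegrable (fun s => (a / cos (a * s)) ^ 2) volume (-x) x :=
    ((continuousOn_const.div (continuous_cos.comp (continuous_const_mul a)).continuousOn
      hcos).pow 2).intervalIntegrable
  rw [intervalIntegral.integral_eq_sub_of_hasDerivAt hderiv hint, mul_neg, tan_neg]
  ring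

lemma collarRho_eq_div_cos (ℓ s : ℝ) :
    collarRho ℓ s = ℓ / (2 * π) / cos (ℓ / (2 * π) * s) := by
  rw [collarRho, div_div, mul_div_right_comm]

lemma mul_collarX_div {ℓ : ℝ} (hℓ : ℓ ≠ 0) :
    ℓ * collarX ℓ / (2 * π) = π / 2 - arctan (sinh (ℓ / 2)) := by
  rw [collarX]
  field_simp

lemma abs_pi_div_two_sub_arctan_lt {x : ℝ} (hx : 0 < x) : |π / 2 - arctan x| < π / 2 :=
  abs_lt.2 ⟨by linarith [arctan_lt_pi_div_two x, pi_pos], by linarith [arctan_pos.2 hx]⟩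

lemma div_sinh_le_one (x : ℝ) : x / sinh x ≤ 1 := by
  rcases lt_trichotomy x 0 with hx | rfl | hx
  · exact (div_le_one_of_neg (sinh_neg_iff.2 hx)).2 (sinh_le_self_iff.2 hx.le)
  · simp
  · exact (div_le_one (sinh_pos_iff.2 hx)).2 (self_le_sinh_iff.2 hx.le)

theorem area_collar_general (ℓ : ℝ) (h1 : 0 < ℓ) :
    (∫ θ in (0:ℝ)..(2 * π), ∫ s in (-(collarX ℓ))..(collarX ℓ), (collarRho ℓ s) ^ 2)
      = 2 * ℓ * Real.tan (ℓ * collarX ℓ / (2 * π)) ∧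
    2 * ℓ * Real.tan (ℓ * collarX ℓ / (2 * π)) = 2 * ℓ / Real.sinh (ℓ / 2) ∧
    2 * ℓ / Real.sinh (ℓ / 2) ≤ 4 := by
  have hangle := mul_collarX_div h1.ne'
  have hsinh : 0 < sinh (ℓ / 2) := sinh_pos_iff.2 (half_pos h1)
  have hinner : ∫ s in -collarX ℓ..collarX ℓ, collarRho ℓ s ^ 2
      = 2 * (ℓ / (2 * π)) * tan (ℓ * collarX ℓ / (2 * π)) := by
    simp_rw [collarRho_eq_div_cos, mul_div_right_comm ℓ (collarX ℓ)]
    refine integral_sq_div_cos_mul ?_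
    rw [← mul_div_right_comm, hangle]
    exact abs_pi_div_two_sub_arctan_lt hsinh
  refine ⟨?_, ?_, ?_⟩
  · rw [hinner, intervalIntegral.integral_const, smul_eq_mul, sub_zero]
    field_simp
  · rw [hangle, tan_pi_div_two_sub, tan_arctan]
    exact (div_eq_mul_inv _ _).symm
  · calc 2 * ℓ / sinh (ℓ / 2) = 4 * (ℓ / 2 / sinh (ℓ / 2)) := by ring
      _ ≤ 4 * 1 := by gcongr; exact div_sinh_le_one _
      _ = 4 := mul_one 4

/-- The total area of the hyperbolic collar `C(ℓ)` equals
`2ℓ tan(ℓX(ℓ)/(2π)) = 2ℓ/sinh(ℓ/2) ≤ 4`. -/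
theorem area_collar (ℓ : ℝ) (h1 : 0 < ℓ) (h2 : ℓ ≤ 2 * Real.arsinh 1) :
    (∫ θ in (0:ℝ)..(2 * π), ∫ s in (-(collarX ℓ))..(collarX ℓ), (collarRho ℓ s) ^ 2)
      = 2 * ℓ * Real.tan (ℓ * collarX ℓ / (2 * π)) ∧
    2 * ℓ * Real.tan (ℓ * collarX ℓ / (2 * π)) = 2 * ℓ / Real.sinh (ℓ / 2) ∧
    2 * ℓ / Real.sinh (ℓ / 2) ≤ 4 :=
  area_collar_general ℓ h1
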